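/- arXiv:math/0607638 — 3 statements merged into one kernel-verified Lean document; each statement's English description precedes it below -/
import Mathlib

section
/- Let R be a commutative ring and x, y nonunits in R such that the product xy is a nonzerodivisor on R. Then ℓ(R/(xy)) = ℓ(R/(x)) + ℓ(R/(y)), where ℓ denotes length as an R-module (valued in ℕ ∪ {∞}). -/
noncomputable def moduleLength (R M : Type*) [Ring R] [AddCommGroup M] [Module R M] : ℕ∞ :=
  Order.height (⊤ : Submodule R M)

theorem moduleLength_eq_length (R M : Type*) [Ring R] [AddCommGroup M] [Module R M] :
    moduleLength R M = Module.length R M :=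
  (Module.length_eq_height R M).symm

theorem length_quotient_mul_eq_add_general
    (R : Type*) [CommRing R] (x y : R)
    (hnzd : x * y ∈ nonZeroDivisors R) :
    moduleLength R (R ⧸ Ideal.span {x * y}) =
      moduleLength R (R ⧸ Ideal.span {x}) + moduleLength R (R ⧸ Ideal.span {y}) := by
  simp only [moduleLength_eq_length]
  -- `Ring.ord_mul`: additivity of length along `0 → R/(x) --(· y)--> R/(xy) → R/(y) → 0`,
  -- which is exact on the left because `y` is a nonzerodivisor.
  exact Ring.ord_mul R (mul_mem_nonZeroDivisors.mp hnzd).2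

/-- If `x, y` are nonunits of a commutative ring `R` such that `x * y` is a
nonzerodivisor on `R`, then `ℓ(R/(xy)) = ℓ(R/(x)) + ℓ(R/(y))`. -/
theorem length_quotient_mul_eq_add
    (R : Type*) [CommRing R] (x y : R)
    (hx : ¬ IsUnit x) (hy : ¬ IsUnit y) (hnzd : x * y ∈ nonZeroDivisors R) :
    moduleLength R (R ⧸ Ideal.span {x * y}) =
      moduleLength R (R ⧸ Ideal.span {x}) + moduleLength R (R ⧸ Ideal.span {y}) :=
  length_quotient_mul_eq_add_general R x y hnzd
end

section
/- Let k be a field and let t_1,…,t_r be nonnegative integers with t_1+⋯+t_r = m+1. Then J_m ⊆ P(m;t_1,…,t_r); that is, every generator g_k (0 ≤ k ≤ m) lies in the ideal generated by the variables x_i^(j) with 1 ≤ i ≤ r and 0 ≤ j ≤ t_i − 1. -/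
/-- The polynomial ring `R = k[x_i^(j) : 1 ≤ i ≤ n, 0 ≤ j ≤ m]` in `n(m+1)` variables;
the variable `x_i^(j)` is `MvPolynomial.X (i, j)`. -/
abbrev JetRing (k : Type*) [Field k] (m n : ℕ) : Type _ :=
  MvPolynomial (Fin n × Fin (m + 1)) k

/-- `jetGen k m n r hrn j` is the generator `g_j`, i.e. the coefficient of `t^j` in the
product `∏_{i=1}^{r} (x_i^(0) + x_i^(1) t + ⋯ + x_i^(m) t^m)`. -/
noncomputable def jetGen (k : Type*) [Field k] (m n r : ℕ) (hrn : r ≤ n) (j : ℕ) :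
    JetRing k m n :=
  Polynomial.coeff
    (∏ i : Fin r, ∑ l : Fin (m + 1),
      Polynomial.C (MvPolynomial.X (Fin.castLE hrn i, l)) * Polynomial.X ^ (l : ℕ)) j

/-- The ideal `J_m = (g_0, …, g_m)` defining the `m`-th jet scheme of `x_1 ⋯ x_r = 0`. -/
noncomputable def jetIdeal (k : Type*) [Field k] (m n r : ℕ) (hrn : r ≤ n) :
    Ideal (JetRing k m n) :=
  Ideal.span (jetGen k m n r hrn '' Set.Iic m)

/-- The ideal `P(m; t_1, …, t_r) = (x_i^(j) : 1 ≤ i ≤ r, 0 ≤ j ≤ t_i - 1)`. -/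
noncomputable def compPrime (k : Type*) [Field k] (m n r : ℕ) (hrn : r ≤ n)
    (t : Fin r → ℕ) : Ideal (JetRing k m n) :=
  Ideal.span {p | ∃ (i : Fin r) (j : Fin (m + 1)), (j : ℕ) < t i ∧
    p = MvPolynomial.X (Fin.castLE hrn i, j)}

/-! Modulo `P(m; t)` the `i`-th factor `∑ₗ x_i^(l) tˡ` is divisible by `t ^ t_i`, so the product
is divisible by `t ^ (t_1 + ⋯ + t_r) = t ^ (m + 1)`, and its coefficients `g_0, …, g_m` vanish
modulo `P(m; t)`. -/

namespace Polynomial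

theorem coeff_prod_mem_of_lt_sum {A ι : Type*} [CommRing A] {I : Ideal A} {s : Finset ι}
    {f : ι → A[X]} {t : ι → ℕ} (hf : ∀ i ∈ s, ∀ d < t i, (f i).coeff d ∈ I) {d : ℕ}
    (hd : d < ∑ i ∈ s, t i) : (∏ i ∈ s, f i).coeff d ∈ I := by
  have hdvd : ∀ i ∈ s, X ^ t i ∣ (f i).map (Ideal.Quotient.mk I) := fun i hi =>
    X_pow_dvd_iff.2 fun e he => by
      rw [coeff_map, Ideal.Quotient.eq_zero_iff_mem]
      exact hf i hi e he
  have hprod := Finset.prod_dvd_prod_of_dvd _ _ hdvd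
  rw [Finset.prod_pow_eq_pow_sum, ← Polynomial.map_prod] at hprod
  rw [← Ideal.Quotient.eq_zero_iff_mem, ← coeff_map]
  exact X_pow_dvd_iff.1 hprod d hd

theorem coeff_sum_C_mul_X_pow_mem {A : Type*} [Semiring A] {I : Ideal A} {N t : ℕ}
    {a : Fin N → A} (ha : ∀ l : Fin N, (l : ℕ) < t → a l ∈ I) {d : ℕ} (hd : d < t) :
    (∑ l : Fin N, C (a l) * X ^ (l : ℕ)).coeff d ∈ I := by
  rw [finsetSum_coeff]
  refine Ideal.sum_mem _ fun l _ => ?_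
  rw [coeff_C_mul_X_pow]
  split_ifs with h
  · exact ha l (h ▸ hd)
  · exact I.zero_mem

end Polynomial

theorem jetIdeal_le_compPrime_general
    (k : Type*) [Field k]
    (m n r : ℕ) (hrn : r ≤ n)
    (t : Fin r → ℕ) (hsum : ∑ i, t i = m + 1) :
    jetIdeal k m n r hrn ≤ compPrime k m n r hrn t := by
  rw [jetIdeal, Ideal.span_le]
  rintro _ ⟨j, hj, rfl⟩
  refine Polynomial.coeff_prod_mem_of_lt_sum (t := t) (fun i _ d hd => ?_)
    (by rw [hsum]; exact Nat.lt_succ_of_le hj)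
  refine Polynomial.coeff_sum_C_mul_X_pow_mem (fun l hl => ?_) hd
  exact Ideal.subset_span ⟨i, l, hl, rfl⟩

/-- If `t_1, …, t_r` are nonnegative integers with `t_1 + ⋯ + t_r = m + 1`, then
`J_m ⊆ P(m; t_1, …, t_r)`: every generator `g_k` (`0 ≤ k ≤ m`) lies in the ideal
generated by the variables `x_i^(j)` with `1 ≤ i ≤ r`, `0 ≤ j ≤ t_i - 1`. -/
theorem jetIdeal_le_compPrime
    (k : Type*) [Field k]
    (m n r : ℕ) (hr : 1 ≤ r) (hrn : r ≤ n)
    (t : Fin r → ℕ) (hsum : ∑ i, t i = m + 1) :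
    jetIdeal k m n r hrn ≤ compPrime k m n r hrn t :=
  jetIdeal_le_compPrime_general k m n r hrn t hsum
end

section
/- Let k be a field, r ≥ 2, and let t_1,…,t_{r−1} be nonnegative integers with t_1+⋯+t_{r−1} = m+1; set t_r = 0 and P = P(m;t_1,…,t_{r−1},0). For 0 ≤ q ≤ m, let h_q ∈ R be the coefficient of t^q in ∏_{i=1}^{r−1}(x_i^(0) + x_i^(1)t + ⋯ + x_i^(m)t^m), i.e., the level-m jet generators of the monomial x_1⋯x_{r−1}. Then J_m·R_P = (h_0,…,h_m)·R_P; consequently ℓ(R_P/J_m R_P) = ℓ(R_P/(h_0,…,h_m)R_P). -/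
/-!
The generators of `J_m` are the coefficients of `t^0, …, t^m` in `g · x_r(t)`, where `g` is the
product of the jets of `x_1, …, x_{r-1}` (whose coefficients are the `h_q`) and
`x_r(t) = x_r^(0) + x_r^(1) t + ⋯`. Since `t_r = 0`, the variable `x_r^(0)` lies outside `P`, so
`x_r(t)` has invertible constant term in `R_P`. Multiplication by such a series is invertible
modulo `t^(m+1)`: `h_j x_r^(0) = g_j - ∑_{a<j} h_a x_r^(j-a)`, so by induction on `j` each `h_j`
lies in `(g_0, …, g_m) R_P`; the reverse inclusion holds already in `R`.
-/

open Polynomial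

namespace Polynomial

theorem coeff_mul_eq_sum_range_add_mul_coeff_zero {S : Type*} [Semiring S] (g h : S[X]) (j : ℕ) :
    (g * h).coeff j = ∑ a ∈ Finset.range j, g.coeff a * h.coeff (j - a) + g.coeff j * h.coeff 0 := by
  rw [coeff_mul, Finset.Nat.sum_antidiagonal_eq_sum_range_succ_mk, Finset.sum_range_succ,
    Nat.sub_self]

theorem span_coeff_mul_le {S : Type*} [CommSemiring S] (g h : S[X]) (m : ℕ) :
    Ideal.span ((g * h).coeff '' Set.Iic m) ≤ Ideal.span (g.coeff '' Set.Iic m) := by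
  rw [Ideal.span_le]
  rintro _ ⟨j, hj, rfl⟩
  rw [coeff_mul]
  refine Ideal.sum_mem _ fun x hx => Ideal.mul_mem_right _ _ (Ideal.subset_span ⟨x.1, ?_, rfl⟩)
  rw [Finset.HasAntidiagonal.mem_antidiagonal] at hx
  exact (show x.1 ≤ j by omega).trans hj

theorem span_coeff_mul_eq_of_isUnit {S : Type*} [CommRing S] {g h : S[X]}
    (hh : IsUnit (h.coeff 0)) (m : ℕ) :
    Ideal.span ((g * h).coeff '' Set.Iic m) = Ideal.span (g.coeff '' Set.Iic m) := by
  refine le_antisymm (span_coeff_mul_le g h m) ?_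
  set J := Ideal.span ((g * h).coeff '' Set.Iic m)
  suffices ∀ j ≤ m, g.coeff j ∈ J by
    rw [Ideal.span_le]
    rintro _ ⟨j, hj, rfl⟩
    exact this j hj
  intro j
  induction j using Nat.strong_induction_on with
  | _ j ih =>
    intro hj
    have hgh : (g * h).coeff j ∈ J := Ideal.subset_span ⟨j, hj, rfl⟩
    have hlower : ∑ a ∈ Finset.range j, g.coeff a * h.coeff (j - a) ∈ J :=
      Ideal.sum_mem _ fun a ha => Ideal.mul_mem_right _ _ <|
        ih a (Finset.mem_range.mp ha) (le_trans (Finset.mem_range.mp ha).le hj)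
    rw [coeff_mul_eq_sum_range_add_mul_coeff_zero] at hgh
    exact (Ideal.mul_unit_mem_iff_mem J hh).mp <| (Ideal.add_mem_iff_right J hlower).mp hgh

end Polynomial

namespace MvPolynomial

theorem X_mem_ideal_span_X_image_iff {σ R : Type*} [CommSemiring R] [Nontrivial R] {s : Set σ}
    {v : σ} : (X v : MvPolynomial σ R) ∈ Ideal.span (X '' s) ↔ v ∈ s := by
  classical
  refine ⟨fun hv => ?_, fun hv => Ideal.subset_span ⟨v, hv, rfl⟩⟩
  obtain ⟨w, hw, hne⟩ := mem_ideal_span_X_image.mp hv (Finsupp.single v 1) (by simp [support_X])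
  rw [Finsupp.single_apply] at hne
  by_cases hvw : v = w
  · exact hvw ▸ hw
  · exact absurd (if_neg hvw) hne

end MvPolynomial

section Jets

variable (k : Type*) [Field k] (m n : ℕ)

noncomputable def jetVar (v : Fin n) : (JetRing k m n)[X] :=
  ∑ l : Fin (m + 1), C (MvPolynomial.X (v, l)) * X ^ (l : ℕ)

theorem jetVar_coeff_zero (v : Fin n) : (jetVar k m n v).coeff 0 = MvPolynomial.X (v, 0) := by
  simp [jetVar, Fin.sum_univ_succ, finsetSum_coeff]

theorem map_jetIdeal {S : Type*} [CommRing S] (φ : JetRing k m n →+* S) (r : ℕ) (hrn : r ≤ n) :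
    (jetIdeal k m n r hrn).map φ =
      Ideal.span ((∏ i : Fin r, (jetVar k m n (Fin.castLE hrn i)).map φ).coeff '' Set.Iic m) := by
  rw [jetIdeal, Ideal.map_span, Set.image_image, ← Polynomial.map_prod]
  simp only [coeff_map]
  rfl

theorem map_jetIdeal_succ_eq_of_isUnit {S : Type*} [CommRing S] (φ : JetRing k m n →+* S)
    (s : ℕ) (hsn : s + 1 ≤ n)
    (hu : IsUnit (φ (MvPolynomial.X (Fin.castLE hsn (Fin.last s), 0)))) :
    (jetIdeal k m n (s + 1) hsn).map φ = (jetIdeal k m n s (by omega)).map φ := by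
  rw [map_jetIdeal, map_jetIdeal, Fin.prod_univ_castSucc]
  refine span_coeff_mul_eq_of_isUnit ?_ m
  rwa [coeff_map, jetVar_coeff_zero]

theorem compPrime_eq_span_X_image (r : ℕ) (hrn : r ≤ n) (t : Fin r → ℕ) :
    compPrime k m n r hrn t =
      Ideal.span (MvPolynomial.X '' {q | ∃ (i : Fin r) (j : Fin (m + 1)), (j : ℕ) < t i ∧
        q = (Fin.castLE hrn i, j)}) := by
  rw [compPrime]
  congr 1
  ext p
  constructor
  · rintro ⟨i, j, hij, rfl⟩
    exact ⟨_, ⟨i, j, hij, rfl⟩, rfl⟩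
  · rintro ⟨_, ⟨i, j, hij, rfl⟩, rfl⟩
    exact ⟨i, j, hij, rfl⟩

theorem X_notMem_compPrime (r : ℕ) (hrn : r ≤ n) (t : Fin r → ℕ) {i : Fin r} {j : Fin (m + 1)}
    (hij : t i ≤ j) : MvPolynomial.X (Fin.castLE hrn i, j) ∉ compPrime k m n r hrn t := by
  rw [compPrime_eq_span_X_image, MvPolynomial.X_mem_ideal_span_X_image_iff]
  rintro ⟨i', j', hlt, hq⟩
  obtain ⟨hi, rfl⟩ := Prod.mk.inj hq
  rw [Fin.castLE_injective hrn hi] at hij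
  omega

end Jets

/-- Suppose `r ≥ 2` and `t_1, …, t_{r-1}` are nonnegative integers with
`t_1 + ⋯ + t_{r-1} = m + 1`; set `t_r = 0` and `P = P(m; t_1, …, t_{r-1}, 0)`.  Let
`h_0, …, h_m` be the level-`m` jet generators of the monomial `x_1⋯x_{r-1}`.  Then
`J_m R_P = (h_0, …, h_m) R_P`, and consequently
`ℓ(R_P/J_m R_P) = ℓ(R_P/(h_0, …, h_m)R_P)`. -/
theorem jetIdeal_localization_eq_of_last_exponent_zero
    (k : Type*) [Field k]
    (m n r : ℕ) (hr : 2 ≤ r) (hrn : r ≤ n)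
    (t : Fin r → ℕ) (htr : t ⟨r - 1, by omega⟩ = 0)
    [hP : (compPrime k m n r hrn t).IsPrime] :
    Ideal.map (algebraMap (JetRing k m n) (Localization (compPrime k m n r hrn t).primeCompl))
        (jetIdeal k m n r hrn) =
      Ideal.map
        (algebraMap (JetRing k m n) (Localization (compPrime k m n r hrn t).primeCompl))
        (jetIdeal k m n (r - 1) (by omega)) ∧
    moduleLength (Localization (compPrime k m n r hrn t).primeCompl)
        (Localization (compPrime k m n r hrn t).primeCompl ⧸
          Ideal.map
            (algebraMap (JetRing k m n) (Localization (compPrime k m n r hrn t).primeCompl))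
            (jetIdeal k m n r hrn)) =
      moduleLength (Localization (compPrime k m n r hrn t).primeCompl)
        (Localization (compPrime k m n r hrn t).primeCompl ⧸
          Ideal.map
            (algebraMap (JetRing k m n) (Localization (compPrime k m n r hrn t).primeCompl))
            (jetIdeal k m n (r - 1) (by omega))) := by
  obtain ⟨s, rfl⟩ : ∃ s, r = s + 1 := ⟨r - 1, by omega⟩
  have hlast : t (Fin.last s) ≤ ((0 : Fin (m + 1)) : ℕ) := htr.le
  set P := compPrime k m n (s + 1) hrn t
  have hunit := IsLocalization.map_units (Localization P.primeCompl)
    (⟨_, X_notMem_compPrime k m n (s + 1) hrn t hlast⟩ : P.primeCompl)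
  have hJ := map_jetIdeal_succ_eq_of_isUnit k m n _ s hrn hunit
  exact ⟨hJ, by rw [hJ]; rfl⟩
end
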